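/- arXiv:1406.7684 — 7 statements merged into one kernel-verified Lean document; each statement's English description precedes it below -/
import Mathlib

section
/- Barwise–Moschovakis theorem: let τ be a relational first-order language, L = τ ∪ {X} its expansion by one new unary relation symbol X, and φ(X,x) an L-formula positive in X with one free first-order variable. The following are equivalent: (1) φ is bounded, i.e., there is n < ω such that φ^{n+1}(A) = φ^n(A) for every τ-structure A; (2) the least fixed point is uniformly first-order definable: there is a τ-formula ψ(x) such that φ^∞(A) = { a ∈ A | A ⊨ ψ(a) } for every τ-structure A; (3) for every τ-structure A there is a τ-formula ψ_A(x) such that φ^∞(A) = { a ∈ A | A ⊨ ψ_A(a) }. -/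
open FirstOrder Language

universe u v w

/-- The language with a single unary relation symbol `X` (and nothing else). -/
def XLang : FirstOrder.Language where
  Functions := fun _ => Empty
  Relations := fun n =>
    match n with
    | 1 => PUnit
    | _ => Empty

/-- The expansion `τ ∪ {X}` of a language `τ` by one new unary relation symbol `X`. -/
abbrev Lx (τ : FirstOrder.Language.{u, v}) : FirstOrder.Language := τ.sum XLang

/-- The `XLang`-structure on `A` interpreting the unary symbol `X` as the set `P`. -/
def xStructure {A : Type w} (P : Set A) : XLang.Structure A where
  funMap := fun f _ => f.elim
  RelMap := fun {n} =>
    match n with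
    | 0 => fun R _ => R.elim
    | 1 => fun _ x => x 0 ∈ P
    | _ + 2 => fun R _ => R.elim

/-- The `(τ ∪ {X})`-structure `(A, P)` expanding the `τ`-structure `A` by interpreting `X` as
`P`. -/
def withX (τ : FirstOrder.Language.{u, v}) {A : Type w} [τ.Structure A] (P : Set A) :
    (Lx τ).Structure A :=
  @Language.sumStructure τ XLang A _ (xStructure P)

/-- The relation symbols of `τ ∪ {X}` that come from the new part, i.e. the symbol `X`. -/
def IsXSymbol {τ : FirstOrder.Language.{u, v}} {n : ℕ} : (Lx τ).Relations n → Prop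
  | Sum.inl _ => False
  | Sum.inr _ => True

/-- `PolarityOK true φ` says every occurrence of `X` in `φ` is under an even number of
negations (i.e. `φ` is positive in `X`); `PolarityOK false φ` says that every occurrence is
under an odd number (i.e. `φ` is negative in `X`). -/
def PolarityOK {τ : FirstOrder.Language.{u, v}} :
    ∀ {α : Type w} {n : ℕ}, Bool → (Lx τ).BoundedFormula α n → Prop
  | _, _, _, .falsum => True
  | _, _, _, .equal _ _ => True
  | _, _, b, .rel R _ => IsXSymbol R → b = true
  | _, _, b, .imp φ ψ => PolarityOK (!b) φ ∧ PolarityOK b ψ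
  | _, _, b, .all φ => PolarityOK b φ

/-- `φ` is positive in the unary relation symbol `X`. -/
def PositiveInX {τ : FirstOrder.Language.{u, v}} {α : Type w} {n : ℕ}
    (φ : (Lx τ).BoundedFormula α n) : Prop :=
  PolarityOK true φ

/-- The operator `F_{φ,A} : P ↦ { a | (A,P) ⊨ φ(a) }` induced by a formula `φ(X,x)` with one
free first-order variable on a `τ`-structure `A`. -/
def stepOp (τ : FirstOrder.Language.{u, v}) {A : Type w} [τ.Structure A]
    (φ : (Lx τ).Formula (Fin 1)) (P : Set A) : Set A :=
  letI := withX τ P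
  { a : A | φ.Realize ![a] }

/-- The least (pre-)fixed point of an operator on sets; for a monotone operator this is the
Knaster–Tarski least fixed point. -/
def lfpSet {A : Type w} (F : Set A → Set A) : Set A :=
  sInf { P | F P ⊆ P }

/-!
Stage `n` of the induction is defined by the `τ`-formula obtained from `φ` by substituting for
`X` the formula defining stage `n - 1`; this gives (1) ⇒ (2), and (2) ⇒ (3) is trivial.

For (3) ⇒ (1), suppose `φ` is unbounded: pick `Aₙ` with `φⁿ⁺¹(Aₙ) ≠ φⁿ(Aₙ)` and let `B` be
the ultraproduct of the `Aₙ` over a nonprincipal ultrafilter on `ℕ`. By Łoś, `φⁿ(B) ⊊ φⁿ⁺¹(B)`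
for every `n`. The ultraproduct is countably saturated, and in such a structure an
`X`-positive formula commutes with unions of increasing chains of definable sets (induction on
the formula, using saturation at universal quantifiers), so `φ^∞(B) = ⋃ₙ φⁿ(B)`. If a
`τ`-formula `ψ` defined `φ^∞(B)`, the type `{ψ(x)} ∪ {¬φⁿ(x) | n ∈ ℕ}` would be finitely
satisfiable, hence realized in `B` by an element of `φ^∞(B)` lying in no finite stage.
-/

open Filter

local notation "⊨[" P "]" => @BoundedFormula.Realize _ _ (withX _ P) _ _

theorem Function.iterate_eq_of_iterate_succ_eq {α : Type*} {f : α → α} {x : α} {n m : ℕ}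
    (h : f^[n + 1] x = f^[n] x) (hnm : n ≤ m) : f^[m] x = f^[n] x := by
  obtain ⟨k, rfl⟩ := Nat.exists_eq_add_of_le hnm
  rw [add_comm, Function.iterate_add_apply]
  exact Function.iterate_fixed (by rwa [Function.iterate_succ_apply'] at h) k

theorem Function.iterate_succ_ne_of_le {α : Type*} {f : α → α} {x : α} {n m : ℕ}
    (h : f^[m + 1] x ≠ f^[m] x) (hnm : n ≤ m) : f^[n + 1] x ≠ f^[n] x := fun hn =>
  h ((iterate_eq_of_iterate_succ_eq hn (by omega)).trans
    (iterate_eq_of_iterate_succ_eq hn hnm).symm)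

namespace OrderHom

variable {α : Type*} [CompleteLattice α] (f : α →o α)

theorem iterate_bot_le_lfp (n : ℕ) : f^[n] ⊥ ≤ f.lfp := by
  induction n with
  | zero => exact bot_le
  | succ n ih => rw [Function.iterate_succ_apply', ← f.map_lfp]; exact f.mono ih

theorem lfp_eq_iterate_bot {n : ℕ} (h : f^[n + 1] ⊥ = f^[n] ⊥) : f.lfp = f^[n] ⊥ :=
  (f.lfp_le (by rw [← Function.iterate_succ_apply' f, h])).antisymm (f.iterate_bot_le_lfp n)

theorem lfp_eq_iSup_iterate_bot (h : f (⨆ n, f^[n] ⊥) ≤ ⨆ n, f^[n] ⊥) :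
    f.lfp = ⨆ n, f^[n] ⊥ :=
  (f.lfp_le h).antisymm (iSup_le f.iterate_bot_le_lfp)

end OrderHom

section Substitution

variable {τ : FirstOrder.Language.{u, v}}

def forgetXFunctions : ∀ {n : ℕ}, (Lx τ).Functions n → τ.Term (Fin n)
  | _, Sum.inl f => f.term
  | _, Sum.inr f => Empty.elim f

variable {A : Type*} [τ.Structure A]

theorem realize_term_withX (P : Set A) {β : Type*} (t : (Lx τ).Term β) (e : β → A) :
    @Term.realize _ A (withX τ P) _ e t = (t.substFunc forgetXFunctions).realize e := by
  let _ := withX τ P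
  refine (Term.realize_substFunc (fun g y => ?_) e t).symm
  rcases g with f | f
  · rfl
  · exact Empty.elim f

variable {α : Type*} {n : ℕ}

theorem realize_withX_equal (P : Set A) (v : α → A) (xs : Fin n → A)
    (t₁ t₂ : (Lx τ).Term (α ⊕ Fin n)) :
    ⊨[P] (.equal t₁ t₂) v xs ↔ (BoundedFormula.equal (t₁.substFunc forgetXFunctions)
      (t₂.substFunc forgetXFunctions)).Realize v xs := by
  simp only [BoundedFormula.Realize, realize_term_withX]

theorem realize_withX_rel_inl (P : Set A) (v : α → A) (xs : Fin n → A) {l : ℕ}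
    (R : τ.Relations l) (ts : Fin l → (Lx τ).Term (α ⊕ Fin n)) :
    ⊨[P] (.rel (Sum.inl R) ts) v xs ↔
      (BoundedFormula.rel R fun i => (ts i).substFunc forgetXFunctions).Realize v xs := by
  simp only [BoundedFormula.Realize, realize_term_withX]
  rfl

theorem realize_withX_rel_X (P : Set A) (v : α → A) (xs : Fin n → A) (R : XLang.Relations 1)
    (ts : Fin 1 → (Lx τ).Term (α ⊕ Fin n)) :
    ⊨[P] (.rel (Sum.inr R) ts) v xs ↔
      ((ts 0).substFunc forgetXFunctions).realize (Sum.elim v xs) ∈ P := by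
  simp only [BoundedFormula.Realize, ← realize_term_withX P]
  rfl

def substXRel (ψ : τ.Formula (Fin 1)) {α : Type*} {n : ℕ} :
    ∀ {l : ℕ}, XLang.Relations l → (Fin l → τ.Term (α ⊕ Fin n)) → τ.BoundedFormula α n
  -- `relabel id` turns the free variables `Fin n` of `ψ(ts 0)` back into bound ones.
  | 1, _, ts => (BoundedFormula.subst ψ fun _ => ts 0).relabel id
  | 0, R, _ | _ + 2, R, _ => Empty.elim R

theorem realize_substXRel (ψ : τ.Formula (Fin 1)) (R : XLang.Relations 1)
    (ts : Fin 1 → τ.Term (α ⊕ Fin n)) (v : α → A) (xs : Fin n → A) :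
    (substXRel ψ R ts).Realize v xs ↔ ψ.Realize ![(ts 0).realize (Sum.elim v xs)] := by
  rw [substXRel, BoundedFormula.realize_relabel, BoundedFormula.realize_subst,
    Matrix.vec_single_eq_const]
  exact iff_of_eq (congrArg₂ _ (by simp) (Subsingleton.elim _ _))

def substX (ψ : τ.Formula (Fin 1)) {α : Type*} :
    ∀ {n : ℕ}, (Lx τ).BoundedFormula α n → τ.BoundedFormula α n
  | _, .falsum => .falsum
  | _, .equal t₁ t₂ => .equal (t₁.substFunc forgetXFunctions) (t₂.substFunc forgetXFunctions)
  | _, .rel (Sum.inl R) ts => .rel R fun i => (ts i).substFunc forgetXFunctions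
  | _, .rel (Sum.inr R) ts => substXRel ψ R fun i => (ts i).substFunc forgetXFunctions
  | _, .imp f g => (substX ψ f).imp (substX ψ g)
  | _, .all f => (substX ψ f).all

theorem realize_substX (ψ : τ.Formula (Fin 1)) (f : (Lx τ).BoundedFormula α n) (v : α → A)
    (xs : Fin n → A) : ⊨[{a | ψ.Realize ![a]}] f v xs ↔ (substX ψ f).Realize v xs := by
  induction f with
  | falsum => rfl
  | equal t₁ t₂ => exact realize_withX_equal _ v xs t₁ t₂
  | rel R ts =>
    rcases R with R | R
    · exact realize_withX_rel_inl _ v xs R ts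
    · rename_i l
      rcases l with _ | _ | l
      · exact Empty.elim R
      · exact (realize_withX_rel_X _ v xs R ts).trans
          (realize_substXRel ψ R (fun i => (ts i).substFunc forgetXFunctions) v xs).symm
      · exact Empty.elim R
  | imp f g ihf ihg => simp only [BoundedFormula.Realize, substX, ihf, ihg]
  | all f ih => simp only [BoundedFormula.Realize, substX, ih]

def stageFormula (φ : (Lx τ).Formula (Fin 1)) : ℕ → τ.Formula (Fin 1)
  | 0 => ⊥
  | n + 1 => substX (stageFormula φ n) φ

theorem iterate_stepOp_eq_setOf (φ : (Lx τ).Formula (Fin 1)) (n : ℕ) :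
    (stepOp τ φ (A := A))^[n] ∅ = {a | (stageFormula φ n).Realize ![a]} := by
  induction n with
  | zero => simp [stageFormula]
  | succ n ih =>
    ext a
    rw [Function.iterate_succ_apply', ih]
    exact realize_substX _ φ ![a] default

theorem PolarityOK.realize_withX_mono {P Q : Set A} (hPQ : P ⊆ Q) {b : Bool}
    {f : (Lx τ).BoundedFormula α n} (hf : PolarityOK b f) {v : α → A} {xs : Fin n → A} :
    ⊨[cond b P Q] f v xs → ⊨[cond b Q P] f v xs := by
  induction f generalizing b with
  | falsum => exact id
  | equal t₁ t₂ => simp only [realize_withX_equal]; exact id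
  | rel R ts =>
    rcases R with R | R
    · simp only [realize_withX_rel_inl]; exact id
    · rename_i l
      obtain rfl : b = true := (PolarityOK.eq_3 _ _ _ _ _ _).mp hf trivial
      rcases l with _ | _ | l
      · exact Empty.elim R
      · rw [cond_true, cond_true, realize_withX_rel_X, realize_withX_rel_X]; exact (hPQ ·)
      · exact Empty.elim R
  | imp f g ihf ihg =>
    rw [PolarityOK] at hf
    cases b <;> exact fun h hf' => ihg hf.2 (h (ihf hf.1 hf'))
  | all f ih => rw [PolarityOK] at hf; exact fun h a => ih hf (h a)

theorem PositiveInX.realize_withX_mono {P Q : Set A} (hPQ : P ⊆ Q)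
    {f : (Lx τ).BoundedFormula α n} (hf : PositiveInX f) {v : α → A} {xs : Fin n → A} :
    ⊨[P] f v xs → ⊨[Q] f v xs :=
  PolarityOK.realize_withX_mono hPQ hf

theorem stepOp_mono {φ : (Lx τ).Formula (Fin 1)} (hφ : PositiveInX φ) :
    Monotone (stepOp τ φ (A := A)) :=
  fun _ _ hPQ _ => hφ.realize_withX_mono hPQ

end Substitution

namespace FirstOrder.Language.Ultraproduct

variable {L : FirstOrder.Language.{u, v}} {M : ℕ → Type*} [∀ i, L.Structure (M i)]
  [∀ i, Nonempty (M i)] {𝒰 : Ultrafilter ℕ}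

theorem realize_snoc_cast {α : Type*} {k : ℕ} (θ : L.BoundedFormula α (k + 1))
    (vr : α → ∀ i, M i) (xr : Fin k → ∀ i, M i) (c : ∀ i, M i) :
    θ.Realize (fun a => (vr a : (𝒰 : Filter ℕ).Product M))
        (Fin.snoc (fun j => (xr j : (𝒰 : Filter ℕ).Product M)) (c : (𝒰 : Filter ℕ).Product M)) ↔
      ∀ᶠ i in (𝒰 : Filter ℕ), θ.Realize (fun a => vr a i) (Fin.snoc (fun j => xr j i) (c i)) := by
  have hcast := Fin.comp_snoc (fun g : ∀ i, M i => (g : (𝒰 : Filter ℕ).Product M)) xr c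
  have heval : ∀ i, (fun j => Fin.snoc (α := fun _ => ∀ i, M i) xr c j i) =
      Fin.snoc (fun j => xr j i) (c i) := fun i => Fin.comp_snoc (fun g : ∀ i, M i => g i) xr c
  simp only [Function.comp_def] at hcast
  rw [← hcast, boundedFormula_realize_cast]
  simp only [heval]

theorem exists_forall_realize_snoc (h𝒰 : (𝒰 : Filter ℕ) ≤ cofinite) {α : Type*} {k : ℕ}
    (θ : ℕ → L.BoundedFormula α (k + 1)) (v : α → (𝒰 : Filter ℕ).Product M)
    (xs : Fin k → (𝒰 : Filter ℕ).Product M)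
    (hθ : ∀ n, ∃ c, ∀ m ≤ n, (θ m).Realize v (Fin.snoc xs c)) :
    ∃ c, ∀ n, (θ n).Realize v (Fin.snoc xs c) := by
  classical
  choose vr hvr using fun a => Quotient.exists_rep (v a)
  choose xr hxr using fun j => Quotient.exists_rep (xs j)
  obtain rfl : (fun a => (vr a : (𝒰 : Filter ℕ).Product M)) = v := funext hvr
  obtain rfl : (fun j => (xr j : (𝒰 : Filter ℕ).Product M)) = xs := funext hxr
  let T (n : ℕ) : Set ℕ :=
    {i | ∃ c : M i, ∀ m ≤ n, (θ m).Realize (fun a => vr a i) (Fin.snoc (fun j => xr j i) c)}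
  have hT (n : ℕ) : T n ∈ 𝒰 := by
    obtain ⟨c, hc⟩ := hθ n
    obtain ⟨cr, rfl⟩ := Quotient.exists_rep c
    have hall := (Set.finite_Iic n).eventually_all.2 fun m hm =>
      (realize_snoc_cast _ _ _ _).1 (hc m hm)
    filter_upwards [hall] with i hi using ⟨cr i, hi⟩
  -- In coordinate `i`, realize `θ 0, …, θ N` for the largest `N ≤ i` for which this is possible.
  have hcoord (i : ℕ) : ∃ c : M i, ∀ n ≤ i, i ∈ T n →
      (θ n).Realize (fun a => vr a i) (Fin.snoc (fun j => xr j i) c) := by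
    by_cases h : i ∈ T (Nat.findGreatest (fun n => i ∈ T n) i)
    · obtain ⟨c, hc⟩ := h
      exact ⟨c, fun n hni hn => hc n (Nat.le_findGreatest hni hn)⟩
    · exact ⟨Classical.arbitrary _, fun n hni hn =>
        (h (Nat.findGreatest_spec (P := fun n => i ∈ T n) hni hn)).elim⟩
  choose c hc using hcoord
  refine ⟨c, fun n => (realize_snoc_cast _ _ _ _).2 ?_⟩
  filter_upwards [hT n, (h𝒰.trans Nat.cofinite_eq_atTop.le) (eventually_ge_atTop n)]
    with i hiT hni using hc i n hni hiT

theorem exists_forall_realize (h𝒰 : (𝒰 : Filter ℕ) ≤ cofinite) (θ : ℕ → L.Formula (Fin 1))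
    (hθ : ∀ n, ∃ c : (𝒰 : Filter ℕ).Product M, ∀ m ≤ n, (θ m).Realize ![c]) :
    ∃ c : (𝒰 : Filter ℕ).Product M, ∀ n, (θ n).Realize ![c] := by
  let θ' (n : ℕ) : L.BoundedFormula Empty 1 :=
    BoundedFormula.relabel (Sum.inr : Fin 1 → Empty ⊕ Fin 1) (θ n)
  have hθ' (n : ℕ) (c : (𝒰 : Filter ℕ).Product M) :
      (θ' n).Realize default (Fin.snoc default c) ↔ (θ n).Realize ![c] := by
    rw [Formula.realize_relabel_sumInr, Fin.snoc_zero, Matrix.vec_single_eq_const]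
  obtain ⟨c, hc⟩ := exists_forall_realize_snoc h𝒰 θ' default default fun n =>
    let ⟨c, hc⟩ := hθ n
    ⟨c, fun m hm => (hθ' m c).2 (hc m hm)⟩
  exact ⟨c, fun n => (hθ' n c).1 (hc n)⟩

theorem exists_realize_of_eventually_exists (χ : L.Formula (Fin 1))
    (h : ∀ᶠ i in (𝒰 : Filter ℕ), ∃ a : M i, χ.Realize ![a]) :
    ∃ c : (𝒰 : Filter ℕ).Product M, χ.Realize ![c] := by
  have hcoord (i : ℕ) : ∃ a : M i, (∃ a' : M i, χ.Realize ![a']) → χ.Realize ![a] := by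
    by_cases hi : ∃ a' : M i, χ.Realize ![a']
    · exact ⟨hi.choose, fun _ => hi.choose_spec⟩
    · exact ⟨Classical.arbitrary _, fun h' => (hi h').elim⟩
  choose c hc using hcoord
  have hcast : χ.Realize fun _ => (c : (𝒰 : Filter ℕ).Product M) := by
    refine (realize_formula_cast χ fun _ => c).2 ?_
    filter_upwards [h] with i hi
    simpa only [Matrix.vec_single_eq_const] using hc i hi
  exact ⟨c, Matrix.vec_single_eq_const (c : (𝒰 : Filter ℕ).Product M) ▸ hcast⟩

end FirstOrder.Language.Ultraproduct

section Continuity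

variable {τ : FirstOrder.Language.{u, v}} {M : ℕ → Type*} [∀ i, τ.Structure (M i)]
  [∀ i, Nonempty (M i)] {𝒰 : Ultrafilter ℕ}

theorem exists_forall_not_realize_withX (h𝒰 : (𝒰 : Filter ℕ) ≤ cofinite)
    {S : ℕ → Set ((𝒰 : Filter ℕ).Product M)} (hS : Monotone S)
    (hSdef : ∀ n, ∃ θ : τ.Formula (Fin 1), S n = {c | θ.Realize ![c]})
    {α : Type*} {k : ℕ} {f : (Lx τ).BoundedFormula α (k + 1)} (hf : PositiveInX f)
    {v : α → (𝒰 : Filter ℕ).Product M} {xs : Fin k → (𝒰 : Filter ℕ).Product M}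
    (hfail : ∀ n, ∃ c, ¬ ⊨[S n] f v (Fin.snoc xs c)) :
    ∃ c, ∀ n, ¬ ⊨[S n] f v (Fin.snoc xs c) := by
  choose θ hθ using hSdef
  have hrealize (n : ℕ) (c) :
      (substX (θ n) f).not.Realize v (Fin.snoc xs c) ↔ ¬ ⊨[S n] f v (Fin.snoc xs c) := by
    rw [BoundedFormula.realize_not, ← realize_substX, ← hθ]
  obtain ⟨c, hc⟩ := Ultraproduct.exists_forall_realize_snoc h𝒰 (fun n => (substX (θ n) f).not)
    v xs fun n =>
      let ⟨c, hc⟩ := hfail n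
      ⟨c, fun m hm => (hrealize m c).2 fun hm' => hc (hf.realize_withX_mono (hS hm) hm')⟩
  exact ⟨c, fun n => (hrealize n c).1 (hc n)⟩

theorem PolarityOK.exists_of_realize_withX_iUnion (h𝒰 : (𝒰 : Filter ℕ) ≤ cofinite)
    {S : ℕ → Set ((𝒰 : Filter ℕ).Product M)} (hS : Monotone S)
    (hSdef : ∀ n, ∃ θ : τ.Formula (Fin 1), S n = {c | θ.Realize ![c]})
    {α : Type*} {k : ℕ} {b : Bool} {f : (Lx τ).BoundedFormula α k} (hf : PolarityOK b f)
    {v : α → (𝒰 : Filter ℕ).Product M} {xs : Fin k → (𝒰 : Filter ℕ).Product M}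
    (h : bif b then ⊨[⋃ n, S n] f v xs else ¬ ⊨[⋃ n, S n] f v xs) :
    ∃ n, bif b then ⊨[S n] f v xs else ¬ ⊨[S n] f v xs := by
  induction f generalizing b with
  | falsum => exact ⟨0, h⟩
  | equal t₁ t₂ => exact ⟨0, by simpa only [realize_withX_equal] using h⟩
  | rel R ts =>
    rcases R with R | R
    · exact ⟨0, by simpa only [realize_withX_rel_inl] using h⟩
    · rename_i l
      obtain rfl : b = true := (PolarityOK.eq_3 _ _ _ _ _ _).mp hf trivial
      rcases l with _ | _ | l
      · exact Empty.elim R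
      · rw [cond_true, realize_withX_rel_X, Set.mem_iUnion] at h
        obtain ⟨n, hn⟩ := h
        exact ⟨n, by rwa [cond_true, realize_withX_rel_X]⟩
      · exact Empty.elim R
  | imp f g ihf ihg =>
    rw [PolarityOK] at hf
    cases b
    · simp only [cond_false, BoundedFormula.realize_imp, Classical.not_imp] at h ⊢
      obtain ⟨n₁, hn₁⟩ := ihf hf.1 h.1
      obtain ⟨n₂, hn₂⟩ := ihg hf.2 h.2
      refine ⟨max n₁ n₂, ?_, fun hg => ?_⟩
      · exact PolarityOK.realize_withX_mono (hS (le_max_left n₁ n₂)) hf.1 hn₁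
      · exact hn₂ (PolarityOK.realize_withX_mono (hS (le_max_right n₁ n₂)) hf.2 hg)
    · simp only [cond_true, BoundedFormula.realize_imp] at h ⊢
      by_cases hfω : ⊨[⋃ n, S n] f v xs
      · obtain ⟨n, hn⟩ := ihg hf.2 (h hfω)
        exact ⟨n, fun _ => hn⟩
      · obtain ⟨n, hn⟩ := ihf hf.1 hfω
        exact ⟨n, fun hfn => absurd hfn hn⟩
  | all f ih =>
    rw [PolarityOK] at hf
    cases b
    · simp only [cond_false, BoundedFormula.realize_all, not_forall] at h ⊢
      obtain ⟨c, hc⟩ := h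
      obtain ⟨n, hn⟩ := ih hf hc
      exact ⟨n, c, hn⟩
    · simp only [cond_true, BoundedFormula.realize_all] at h ⊢
      by_contra! hfail
      obtain ⟨c, hc⟩ := exists_forall_not_realize_withX h𝒰 hS hSdef hf hfail
      obtain ⟨n, hn⟩ := ih hf (h c)
      exact hc n hn

end Continuity

section BarwiseMoschovakis

variable {τ : FirstOrder.Language.{u, v}} {φ : (Lx τ).Formula (Fin 1)}

theorem monotone_iterate_stepOp (hφ : PositiveInX φ) {A : Type*} [τ.Structure A] :
    Monotone fun n => (stepOp τ φ (A := A))^[n] ∅ :=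
  (stepOp_mono hφ).monotone_iterate_of_le_map (Set.empty_subset _)

theorem lfpSet_stepOp_eq_iterate (hφ : PositiveInX φ) {A : Type*} [τ.Structure A] {n : ℕ}
    (h : (stepOp τ φ (A := A))^[n + 1] ∅ = (stepOp τ φ)^[n] ∅) :
    lfpSet (stepOp τ φ (A := A)) = (stepOp τ φ)^[n] ∅ :=
  OrderHom.lfp_eq_iterate_bot ⟨stepOp τ φ, stepOp_mono hφ⟩ h

theorem realize_stageFormula_mono (hφ : PositiveInX φ) {A : Type*} [τ.Structure A] {m n : ℕ}
    (hmn : m ≤ n) {a : A} (h : (stageFormula φ m).Realize ![a]) :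
    (stageFormula φ n).Realize ![a] := by
  have := monotone_iterate_stepOp hφ (A := A) hmn
  simp only [iterate_stepOp_eq_setOf] at this
  exact this h

theorem exists_realize_stageFormula_succ_not (hφ : PositiveInX φ) {A : Type*} [τ.Structure A]
    {n : ℕ} (h : (stepOp τ φ (A := A))^[n + 1] ∅ ≠ (stepOp τ φ)^[n] ∅) :
    ∃ a : A, (stageFormula φ (n + 1)).Realize ![a] ∧ ¬ (stageFormula φ n).Realize ![a] := by
  obtain ⟨a, ha, hna⟩ := Set.exists_of_ssubset
    ((monotone_iterate_stepOp hφ n.le_succ).ssubset_of_ne h.symm)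
  simp only [iterate_stepOp_eq_setOf] at ha hna
  exact ⟨a, ha, hna⟩

variable {M : ℕ → Type*} [∀ i, τ.Structure (M i)] [∀ i, Nonempty (M i)] {𝒰 : Ultrafilter ℕ}

theorem lfpSet_stepOp_ultraproduct_eq_iUnion (h𝒰 : (𝒰 : Filter ℕ) ≤ cofinite) (hφ : PositiveInX φ) :
    lfpSet (stepOp τ φ (A := (𝒰 : Filter ℕ).Product M)) = ⋃ n, (stepOp τ φ)^[n] ∅ := by
  refine OrderHom.lfp_eq_iSup_iterate_bot ⟨stepOp τ φ, stepOp_mono hφ⟩ fun a ha => ?_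
  obtain ⟨n, hn⟩ := PolarityOK.exists_of_realize_withX_iUnion h𝒰 (monotone_iterate_stepOp hφ)
    (fun n => ⟨stageFormula φ n, iterate_stepOp_eq_setOf φ n⟩) hφ (b := true) ha
  exact Set.mem_iUnion.2 ⟨n + 1, by rw [Function.iterate_succ_apply']; exact hn⟩

theorem iterate_stepOp_ultraproduct_succ_ne (hφ : PositiveInX φ)
    (hM : ∀ n, ∀ᶠ i in (𝒰 : Filter ℕ), (stepOp τ φ (A := M i))^[n + 1] ∅ ≠ (stepOp τ φ)^[n] ∅)
    (n : ℕ) :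
    (stepOp τ φ (A := (𝒰 : Filter ℕ).Product M))^[n + 1] ∅ ≠ (stepOp τ φ)^[n] ∅ := by
  obtain ⟨c, hc⟩ := Ultraproduct.exists_realize_of_eventually_exists
    (stageFormula φ (n + 1) ⊓ (stageFormula φ n).not) <| (hM n).mono fun i hi =>
      let ⟨a, ha, hna⟩ := exists_realize_stageFormula_succ_not hφ hi
      ⟨a, Formula.realize_inf.2 ⟨ha, hna⟩⟩
  rw [Formula.realize_inf, Formula.realize_not] at hc
  rw [iterate_stepOp_eq_setOf, iterate_stepOp_eq_setOf]
  exact fun heq => hc.2 (heq ▸ hc.1 : c ∈ {a | (stageFormula φ n).Realize ![a]})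

theorem lfpSet_stepOp_ultraproduct_ne_setOf (h𝒰 : (𝒰 : Filter ℕ) ≤ cofinite)
    (hφ : PositiveInX φ)
    (hM : ∀ n, ∀ᶠ i in (𝒰 : Filter ℕ), (stepOp τ φ (A := M i))^[n + 1] ∅ ≠ (stepOp τ φ)^[n] ∅)
    (ψ : τ.Formula (Fin 1)) :
    lfpSet (stepOp τ φ (A := (𝒰 : Filter ℕ).Product M)) ≠ {a | ψ.Realize ![a]} := by
  intro hψ
  obtain ⟨c, hc⟩ := Ultraproduct.exists_forall_realize (M := M) h𝒰
    (fun n => ψ ⊓ (stageFormula φ n).not) fun n => by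
      obtain ⟨c, hc, hnc⟩ :=
        exists_realize_stageFormula_succ_not hφ (iterate_stepOp_ultraproduct_succ_ne hφ hM n)
      have hψc : c ∈ {a | ψ.Realize ![a]} := hψ ▸ OrderHom.iterate_bot_le_lfp
        ⟨stepOp τ φ, stepOp_mono hφ⟩ (n + 1) ((iterate_stepOp_eq_setOf φ (n + 1)).ge hc)
      exact ⟨c, fun m hm => Formula.realize_inf.2
        ⟨hψc, Formula.realize_not.2 fun h => hnc (realize_stageFormula_mono hφ hm h)⟩⟩
  simp only [Formula.realize_inf, Formula.realize_not] at hc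
  have hlfp : c ∈ lfpSet (stepOp τ φ) := hψ ▸ (hc 0).1
  rw [lfpSet_stepOp_ultraproduct_eq_iUnion h𝒰 hφ, Set.mem_iUnion] at hlfp
  obtain ⟨n, hn⟩ := hlfp
  rw [iterate_stepOp_eq_setOf] at hn
  exact (hc n).2 hn

end BarwiseMoschovakis

theorem barwise_moschovakis_general {τ : FirstOrder.Language.{u, v}}
    (φ : (Lx τ).Formula (Fin 1)) (hφ : PositiveInX φ) :
    List.TFAE
      [ ∃ n : ℕ, ∀ (A : Type w) [τ.Structure A],
          (stepOp τ φ (A := A))^[n + 1] ∅ = (stepOp τ φ (A := A))^[n] ∅,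
        ∃ ψ : τ.Formula (Fin 1), ∀ (A : Type w) [τ.Structure A],
          lfpSet (stepOp τ φ (A := A)) = { a : A | ψ.Realize ![a] },
        ∀ (A : Type w) [τ.Structure A], ∃ ψ : τ.Formula (Fin 1),
          lfpSet (stepOp τ φ (A := A)) = { a : A | ψ.Realize ![a] } ] := by
  tfae_have 1 → 2 := fun ⟨n, hn⟩ => ⟨stageFormula φ n, fun A _ =>
    (lfpSet_stepOp_eq_iterate hφ (hn A)).trans (iterate_stepOp_eq_setOf φ n)⟩
  tfae_have 2 → 3 := fun ⟨ψ, hψ⟩ A _ => ⟨ψ, hψ A⟩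
  tfae_have 3 → 1 := by
    intro hdef
    by_contra! hunbounded
    choose M _ hM using hunbounded
    have (i : ℕ) : Nonempty (M i) :=
      let ⟨a, _⟩ := exists_realize_stageFormula_succ_not hφ (hM i)
      ⟨a⟩
    obtain ⟨ψ, hψ⟩ := hdef ((hyperfilter ℕ : Filter ℕ).Product M)
    refine lfpSet_stepOp_ultraproduct_ne_setOf hyperfilter_le_cofinite hφ (fun n => ?_) ψ hψ
    filter_upwards [(hyperfilter_le_cofinite.trans Nat.cofinite_eq_atTop.le)
      (eventually_ge_atTop n)] with i hni using Function.iterate_succ_ne_of_le (hM i) hni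
  tfae_finish

/-- **The Barwise–Moschovakis theorem.** For a relational language `τ` and an `X`-positive
`(τ ∪ {X})`-formula `φ(X,x)` with one free first-order variable, the following are equivalent:
(1) `φ` is bounded, i.e. some finite stage `φ^n` is the fixed point on every `τ`-structure;
(2) the least fixed point `φ^∞` is uniformly definable by a single `τ`-formula `ψ(x)`;
(3) on every `τ`-structure `A` the least fixed point is definable by some `τ`-formula. -/
theorem barwise_moschovakis {τ : FirstOrder.Language.{u, v}} [τ.IsRelational]
    (φ : (Lx τ).Formula (Fin 1)) (hφ : PositiveInX φ) :
    List.TFAE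
      [ ∃ n : ℕ, ∀ (A : Type w) [τ.Structure A],
          (stepOp τ φ (A := A))^[n + 1] ∅ = (stepOp τ φ (A := A))^[n] ∅,
        ∃ ψ : τ.Formula (Fin 1), ∀ (A : Type w) [τ.Structure A],
          lfpSet (stepOp τ φ (A := A)) = { a : A | ψ.Realize ![a] },
        ∀ (A : Type w) [τ.Structure A], ∃ ψ : τ.Formula (Fin 1),
          lfpSet (stepOp τ φ (A := A)) = { a : A | ψ.Realize ![a] } ] :=
  barwise_moschovakis_general φ hφ
end

section
/- The well-foundedness operator: let R be a binary relation on a type A and define F : Set A → Set A by F(P) = { a | ∀ b, R b a → b ∈ P }. Then F is monotone; its least fixed point is { a | Acc R a }, the set of R-accessible elements; and for every ordinal α the stage F^α(∅) equals { a | ∃ h : Acc R a, rank(h) < α }, where rank(h) denotes the ordinal rank of the accessibility proof h (Mathlib's Acc.rank). -/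
open OrdinalApprox

universe u

/-!
Since `Acc.rank` is the supremum of the successors of the ranks of the `R`-predecessors,
`F` sends `{rank < β}` to `{rank ≤ β}`; the union of these over `β < α` is `{rank < α}`,
which is the recursion defining the stages. The least fixed point is `{a | Acc R a}` because
`Acc` is the inductive predicate generated by `F`.
-/

namespace Acc

variable {A : Type u} {R : A → A → Prop}

theorem rank_le_iff {a : A} (h : Acc R a) {β : Ordinal.{u}} :
    h.rank ≤ β ↔ ∀ b (hb : R b a), (h.inv hb).rank < β := by
  simp only [h.rank_eq, Ordinal.iSup_le_iff, Order.succ_le_iff, Subtype.forall]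

end Acc

section AccOperator

variable {A : Type u} (R : A → A → Prop)

def accOperator : Set A →o Set A where
  toFun P := {a | ∀ b, R b a → b ∈ P}
  monotone' _ _ hPQ _ ha b hb := hPQ (ha b hb)

theorem lfp_accOperator : (accOperator R).lfp = {a | Acc R a} := by
  refine le_antisymm (OrderHom.lfp_le _ fun a ha => Acc.intro a ha) fun a ha => ?_
  induction ha with
  | intro a _ ih =>
    rw [← OrderHom.map_lfp]
    exact ih

theorem accOperator_setOf_rank_lt (β : Ordinal.{u}) :
    accOperator R {b | ∃ h : Acc R b, h.rank < β} = {a | ∃ h : Acc R a, h.rank ≤ β} := by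
  ext a
  constructor
  · intro ha
    have hacc : Acc R a := Acc.intro a fun b hb => (ha b hb).1
    exact ⟨hacc, hacc.rank_le_iff.2 fun b hb => (ha b hb).2⟩
  · rintro ⟨h, hle⟩ b hb
    exact ⟨h.inv hb, h.rank_le_iff.1 hle b hb⟩

theorem lfpApprox_accOperator (α : Ordinal.{u}) :
    lfpApprox (accOperator R) ⊥ α = {a | ∃ h : Acc R a, h.rank < α} := by
  induction α using WellFoundedLT.induction with
  | _ α ih =>
    calc lfpApprox (accOperator R) ⊥ α
        = ⨆ β < α, accOperator R (lfpApprox (accOperator R) ⊥ β) := by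
          rw [lfpApprox, bot_sup_eq]
      _ = ⨆ β < α, {a | ∃ h : Acc R a, h.rank ≤ β} :=
          iSup_congr fun β => iSup_congr fun hβ => by rw [ih β hβ, accOperator_setOf_rank_lt]
      _ = {a | ∃ h : Acc R a, h.rank < α} := by
          ext a
          simp only [Set.iSup_eq_iUnion, Set.mem_iUnion, Set.mem_ofPred_eq, exists_prop]
          constructor
          · rintro ⟨β, hβ, h, hle⟩
            exact ⟨h, hle.trans_lt hβ⟩
          · rintro ⟨h, hlt⟩
            exact ⟨h.rank, hlt, h, le_rfl⟩

end AccOperator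

/-- **The well-foundedness operator.** For a binary relation `R` on `A`, the operator
`F(P) = { a | ∀ b, R b a → b ∈ P }` is monotone; its least fixed point is the set of
`R`-accessible elements; and its `α`-th stage is the set of elements whose accessibility
proof has ordinal rank `< α`. -/
theorem wellFoundedness_operator {A : Type u} (R : A → A → Prop) (F : Set A → Set A)
    (hFdef : F = fun P => { a : A | ∀ b : A, R b a → b ∈ P }) :
    ∃ hF : Monotone F,
      OrderHom.lfp ⟨F, hF⟩ = { a : A | Acc R a } ∧
      ∀ α : Ordinal.{u},
        lfpApprox ⟨F, hF⟩ ⊥ α = { a : A | ∃ h : Acc R a, h.rank < α } := by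
  subst hFdef
  exact ⟨(accOperator R).monotone, lfp_accOperator R, lfpApprox_accOperator R⟩
end

section
/- Restriction lemma for fixed-point iterations (abstract form of the guarded-restriction argument): let F : Set A → Set A be monotone and S ⊆ A a set such that F(P) ∩ S = F(P ∩ S) ∩ S for all P ⊆ A. Define G : Set A → Set A by G(P) := F(P) ∩ S. Then G is monotone; for every ordinal α, G^α(∅) = F^α(∅) ∩ S; the least fixed point of G equals (lfp F) ∩ S; and the closure ordinal of G is at most the closure ordinal of F. -/
/-!
Restriction to `S`, i.e. `P ↦ P ∩ S`, preserves arbitrary unions, and the hypothesis on `S` says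
precisely that it semiconjugates `F` to `G`: `G (P ∩ S) = F P ∩ S`. A join-preserving
semiconjugacy carries every transfinite stage of `F` to the stage of `G` of the same index, hence
(once both have stabilized) the least fixed point as well, and any ordinal at which the stages
of `F` have stabilized is one at which those of `G` have.
-/

open OrdinalApprox

universe u

/-- The closure ordinal of a monotone operator: the least ordinal `γ` with
`F^{γ+1}(∅) = F^γ(∅)`. -/
noncomputable def closureOrdinal {A : Type u} (F : Set A →o Set A) : Ordinal.{u} :=
  sInf { γ : Ordinal.{u} | lfpApprox F ⊥ (γ + 1) = lfpApprox F ⊥ γ }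

open Cardinal

def infRightSSupHom {α : Type*} [Order.Frame α] (b : α) : sSupHom α α where
  toFun a := a ⊓ b
  map_sSup' s := by rw [sSup_inf_eq, sSup_image]

section Approximants

variable {α β : Type u} [CompleteLattice α] [CompleteLattice β]
  (f : α →o α) (g : β →o β) (π : sSupHom α β)

theorem map_lfpApprox (hπ : ∀ a, g (π a) = π (f a)) (x : α) (o : Ordinal.{u}) :
    π (lfpApprox f x o) = lfpApprox g (π x) o := by
  induction o using WellFoundedLT.induction with | ind o ih
  rw [lfpApprox, lfpApprox, map_sup, map_iSup₂]
  congr 1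
  exact iSup_congr fun b ↦ iSup_congr fun hb ↦ by rw [← hπ, ih b hb]

theorem lfpApprox_eq_lfp_of_le {o : Ordinal.{u}} (ho : ord (Order.succ #α) ≤ o) :
    lfpApprox f ⊥ o = f.lfp := by
  rw [← lfpApprox_ord_eq_lfp]
  exact lfpApprox_eq_of_mem_fixedPoints f ho (lfpApprox_ord_mem_fixedPoint f bot_le)

theorem lfpApprox_ord_succ_add_one :
    lfpApprox f ⊥ (ord (Order.succ #α) + 1) = lfpApprox f ⊥ (ord (Order.succ #α)) := by
  rw [lfpApprox_add_one f bot_le]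
  exact lfpApprox_ord_mem_fixedPoint f bot_le

theorem map_lfp (hπ : ∀ a, g (π a) = π (f a)) : π f.lfp = g.lfp := by
  set o := max (ord (Order.succ #α)) (ord (Order.succ #β))
  rw [← lfpApprox_eq_lfp_of_le f le_sup_left, ← lfpApprox_eq_lfp_of_le g (o := o) le_sup_right,
    map_lfpApprox f g π hπ, map_bot]

end Approximants

theorem closureOrdinal_le_of_forall_stable {A : Type u} (F G : Set A →o Set A)
    (h : ∀ γ, lfpApprox F ⊥ (γ + 1) = lfpApprox F ⊥ γ →
      lfpApprox G ⊥ (γ + 1) = lfpApprox G ⊥ γ) :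
    closureOrdinal G ≤ closureOrdinal F :=
  csInf_le_csInf (OrderBot.bddBelow _) ⟨_, lfpApprox_ord_succ_add_one F⟩ h

/-- **Restriction lemma for fixed-point iterations.** If `F` is monotone and `S` satisfies
`F(P) ∩ S = F(P ∩ S) ∩ S` for all `P`, then `G(P) := F(P) ∩ S` is monotone, its stages are the
`S`-restrictions of the stages of `F`, its least fixed point is `lfp F ∩ S`, and its closure
ordinal is at most that of `F`. -/
theorem restriction_lemma {A : Type u} (F : Set A → Set A) (hF : Monotone F)
    (S : Set A) (hFS : ∀ P : Set A, F P ∩ S = F (P ∩ S) ∩ S)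
    (G : Set A → Set A) (hGdef : G = fun P => F P ∩ S) :
    ∃ hG : Monotone G,
      (∀ α : Ordinal.{u}, lfpApprox ⟨G, hG⟩ ⊥ α = lfpApprox ⟨F, hF⟩ ⊥ α ∩ S) ∧
      OrderHom.lfp ⟨G, hG⟩ = OrderHom.lfp ⟨F, hF⟩ ∩ S ∧
      closureOrdinal ⟨G, hG⟩ ≤ closureOrdinal ⟨F, hF⟩ := by
  subst hGdef
  have hG : Monotone fun P => F P ∩ S := fun P Q h ↦ Set.inter_subset_inter_left S (hF h)
  have hsemiconj : ∀ P, F (infRightSSupHom S P) ∩ S = infRightSSupHom S (F P) :=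
    fun P ↦ (hFS P).symm
  have hstages (α : Ordinal.{u}) : lfpApprox ⟨_, hG⟩ ⊥ α = lfpApprox ⟨F, hF⟩ ⊥ α ∩ S := by
    simpa [infRightSSupHom] using (map_lfpApprox ⟨F, hF⟩ ⟨_, hG⟩ _ hsemiconj ⊥ α).symm
  refine ⟨hG, hstages, (map_lfp ⟨F, hF⟩ ⟨_, hG⟩ _ hsemiconj).symm, ?_⟩
  exact closureOrdinal_le_of_forall_stable _ _ fun γ hγ ↦ by rw [hstages, hstages, hγ]
end

section
/- Sandwich lemma for closure ordinals: let F, H : Set A → Set A be monotone operators and γ an ordinal such that for every ordinal α one has F^α(∅) ⊆ H^α(∅) ⊆ F^{γ+α}(∅). Then the least fixed points of F and H coincide, and the closure ordinal of F is at most γ + β, where β is the closure ordinal of H. -/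
/-!
A stage of the iteration from `⊥` is stationary exactly when it equals the least fixed point,
and every iteration reaches its least fixed point by stage `(succ #α).ord`. Evaluating the
sandwich there gives `lfp F = lfp H`; evaluating it at `β` gives
`lfp F = lfp H = H^β(∅) ⊆ F^{γ+β}(∅)`, so `F` is stationary at `γ + β`.
-/

open OrdinalApprox

universe u

namespace OrdinalApprox

variable {α : Type u} [CompleteLattice α]

theorem lfpApprox_bot_le_lfp (f : α →o α) (a : Ordinal.{u}) : lfpApprox f ⊥ a ≤ f.lfp :=
  lfpApprox_le_of_mem_fixedPoints f f.map_lfp bot_le a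

theorem lfpApprox_bot_add_one_eq_iff (f : α →o α) (a : Ordinal.{u}) :
    lfpApprox f ⊥ (a + 1) = lfpApprox f ⊥ a ↔ lfpApprox f ⊥ a = f.lfp := by
  rw [lfpApprox_add_one f bot_le]
  constructor
  · intro hfix
    exact le_antisymm (lfpApprox_bot_le_lfp f a) (f.lfp_le hfix.le)
  · intro hlfp
    rw [hlfp, f.map_lfp]

theorem lfp_le_lfp_of_lfpApprox_le {f g : α →o α} (φ : Ordinal.{u} → Ordinal.{u})
    (h : ∀ a, lfpApprox f ⊥ a ≤ lfpApprox g ⊥ (φ a)) : f.lfp ≤ g.lfp :=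
  calc f.lfp = lfpApprox f ⊥ (Cardinal.ord (Order.succ (Cardinal.mk α))) :=
        (lfpApprox_ord_eq_lfp f).symm
    _ ≤ lfpApprox g ⊥ _ := h _
    _ ≤ g.lfp := lfpApprox_bot_le_lfp g _

end OrdinalApprox

theorem closureOrdinal_le {A : Type u} {F : Set A →o Set A} {a : Ordinal.{u}}
    (h : lfpApprox F ⊥ a = F.lfp) : closureOrdinal F ≤ a :=
  csInf_le (OrderBot.bddBelow _) ((lfpApprox_bot_add_one_eq_iff F a).mpr h)

theorem lfpApprox_closureOrdinal {A : Type u} (F : Set A →o Set A) :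
    lfpApprox F ⊥ (closureOrdinal F) = F.lfp := by
  have hne : {a : Ordinal.{u} | lfpApprox F ⊥ (a + 1) = lfpApprox F ⊥ a}.Nonempty :=
    ⟨_, (lfpApprox_bot_add_one_eq_iff F _).mpr (lfpApprox_ord_eq_lfp F)⟩
  exact (lfpApprox_bot_add_one_eq_iff F _).mp (csInf_mem hne)

/-- **Sandwich lemma for closure ordinals.** If `F, H` are monotone and
`F^α(∅) ⊆ H^α(∅) ⊆ F^{γ+α}(∅)` for every ordinal `α`, then `lfp F = lfp H` and the closure
ordinal of `F` is at most `γ + β`, where `β` is the closure ordinal of `H`. -/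
theorem sandwich_lemma {A : Type u} (F H : Set A → Set A) (hF : Monotone F) (hH : Monotone H)
    (γ : Ordinal.{u})
    (hsand : ∀ α : Ordinal.{u},
      lfpApprox ⟨F, hF⟩ ⊥ α ⊆ lfpApprox ⟨H, hH⟩ ⊥ α ∧
      lfpApprox ⟨H, hH⟩ ⊥ α ⊆ lfpApprox ⟨F, hF⟩ ⊥ (γ + α)) :
    OrderHom.lfp ⟨F, hF⟩ = OrderHom.lfp ⟨H, hH⟩ ∧
    closureOrdinal ⟨F, hF⟩ ≤ γ + closureOrdinal ⟨H, hH⟩ := by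
  obtain ⟨hFH, hHF⟩ := forall_and.mp hsand
  have hlfp : OrderHom.lfp ⟨F, hF⟩ = OrderHom.lfp ⟨H, hH⟩ :=
    le_antisymm (lfp_le_lfp_of_lfpApprox_le id hFH) (lfp_le_lfp_of_lfpApprox_le (γ + ·) hHF)
  refine ⟨hlfp, closureOrdinal_le (le_antisymm (lfpApprox_bot_le_lfp _ _) ?_)⟩
  calc OrderHom.lfp ⟨F, hF⟩ = OrderHom.lfp ⟨H, hH⟩ := hlfp
    _ = lfpApprox ⟨H, hH⟩ ⊥ (closureOrdinal ⟨H, hH⟩) := (lfpApprox_closureOrdinal _).symm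
    _ ≤ _ := hHF _
end

section
/- Operators with bounded local dependence are uniformly bounded (abstract form of the claim that a fixed point whose recursion variable occurs only quantifier-free is trivially bounded): let B be a type, F : Set B → Set B monotone, T : B → Finset B, and N a natural number such that (i) for all b and all P ⊆ B, b ∈ F(P) if and only if b ∈ F(P ∩ T(b)); (ii) for all b and all c ∈ T(b), T(c) ⊆ T(b); and (iii) |T(b)| ≤ N for all b. Then F^{N+1}(∅) equals the least fixed point of F; in particular the closure ordinal of F is at most N+1. -/
open OrdinalApprox

universe u

/-! For a `T`-closed set `S`, locality makes the traces `F^n(∅) ∩ S` the iterates of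
`P ↦ F(P) ∩ S` from `∅`: an increasing chain of subsets of `S` that stays stationary once it
is stationary for one step. For `S = T(b)` with `|T(b)| ≤ N` it is therefore stationary from
stage `N` on, so `b ∈ F^{N+2}(∅) ↔ b ∈ F^{N+1}(∅)` for every `b`. A finite stage that is a fixed
point is the least fixed point. -/

section FixedPoint

variable {α : Type u} [CompleteLattice α] (f : α →o α)

theorem lfpApprox_natCast (n : ℕ) : lfpApprox f ⊥ n = f^[n] ⊥ := by
  induction n with
  | zero => exact lfpApprox_zero f
  | succ n ih => rw [Nat.cast_succ, lfpApprox_add_one f bot_le, ih, Function.iterate_succ_apply']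

theorem iterate_bot_eq_lfp_of_isFixedPt {n : ℕ} (h : Function.IsFixedPt f (f^[n] ⊥)) :
    f^[n] ⊥ = f.lfp :=
  le_antisymm
    (lfpApprox_natCast f n ▸ lfpApprox_le_of_mem_fixedPoints f f.isFixedPt_lfp bot_le n)
    (f.lfp_le_fixed h)

end FixedPoint

theorem closureOrdinal_le_of_isFixedPt_iterate {A : Type u} (f : Set A →o Set A) {n : ℕ}
    (h : Function.IsFixedPt f (f^[n] ⊥)) : closureOrdinal f ≤ n := by
  apply csInf_le'
  change lfpApprox f ⊥ (n + 1) = lfpApprox f ⊥ n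
  rw [← Nat.cast_succ, lfpApprox_natCast, lfpApprox_natCast, Function.iterate_succ_apply']
  exact h

section FiniteChain

variable {α : Type*} {g : Set α → Set α} {S : Set α}

theorem le_ncard_iterate_empty (hg : Monotone g) (hS : S.Finite) (hgS : ∀ P, g P ⊆ S) :
    ∀ n, (∀ k < n, g^[k + 1] ∅ ≠ g^[k] ∅) → n ≤ (g^[n] ∅).ncard
  | 0, _ => Nat.zero_le _
  | n + 1, hne => by
    have hchain : g^[n] ∅ ⊂ g^[n + 1] ∅ :=
      (hg.monotone_iterate_of_le_map (Set.empty_subset _) n.le_succ).ssubset_of_ne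
        (hne n n.lt_succ_self).symm
    have hfin : (g^[n + 1] ∅).Finite := by
      rw [Function.iterate_succ_apply']
      exact hS.subset (hgS _)
    calc n ≤ (g^[n] ∅).ncard := le_ncard_iterate_empty hg hS hgS n fun k hk => hne k (by omega)
      _ < (g^[n + 1] ∅).ncard := Set.ncard_lt_ncard hchain hfin

theorem iterate_succ_empty_eq_of_ncard_le (hg : Monotone g) (hS : S.Finite)
    (hgS : ∀ P, g P ⊆ S) {N : ℕ} (hN : S.ncard ≤ N) : g^[N + 1] ∅ = g^[N] ∅ := by
  by_contra hne
  have hgrow : ∀ k < N + 1, g^[k + 1] ∅ ≠ g^[k] ∅ := by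
    intro k hk hk_fixed
    apply hne
    have hstable : ∀ m, g^[m + k] ∅ = g^[k] ∅ := fun m => by
      rw [Function.iterate_add_apply, Function.iterate_fixed]
      rwa [Function.iterate_succ_apply'] at hk_fixed
    obtain ⟨m, rfl⟩ := Nat.exists_eq_add_of_le' (Nat.le_of_lt_succ hk)
    rw [add_right_comm, hstable, hstable]
  have hsub : g^[N + 1] ∅ ⊆ S := by
    rw [Function.iterate_succ_apply']
    exact hgS _
  have := le_ncard_iterate_empty hg hS hgS (N + 1) hgrow
  have := Set.ncard_le_ncard hsub hS
  omega

end FiniteChain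

section LocalDependence

variable {B : Type*} {F : Set B → Set B} {T : B → Finset B} {S : Set B}

theorem map_inter_eq_of_inter_eq (hloc : ∀ (b : B) (P : Set B), b ∈ F P ↔ b ∈ F (P ∩ (T b : Set B)))
    (hS : ∀ c ∈ S, (T c : Set B) ⊆ S) {P Q : Set B} (h : P ∩ S = Q ∩ S) :
    F P ∩ S = F Q ∩ S := by
  ext c
  refine and_congr_left fun hc => ?_
  have hPQ : P ∩ T c = Q ∩ T c := by
    rw [← Set.inter_eq_right.mpr (hS c hc), ← Set.inter_assoc, h, Set.inter_assoc]
  rw [hloc c P, hloc c Q, hPQ]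

theorem iterate_empty_inter_eq
    (hloc : ∀ (b : B) (P : Set B), b ∈ F P ↔ b ∈ F (P ∩ (T b : Set B)))
    (hS : ∀ c ∈ S, (T c : Set B) ⊆ S) (n : ℕ) :
    F^[n] ∅ ∩ S = (fun P => F P ∩ S)^[n] ∅ := by
  induction n with
  | zero => exact Set.empty_inter S
  | succ n ih =>
    rw [Function.iterate_succ_apply', Function.iterate_succ_apply', ← ih]
    exact map_inter_eq_of_inter_eq hloc hS (by rw [Set.inter_assoc, Set.inter_self])

theorem isFixedPt_iterate_empty_of_local (hF : Monotone F) {N : ℕ}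
    (hloc : ∀ (b : B) (P : Set B), b ∈ F P ↔ b ∈ F (P ∩ (T b : Set B)))
    (htrans : ∀ b : B, ∀ c ∈ T b, (T c : Set B) ⊆ (T b : Set B))
    (hcard : ∀ b : B, (T b).card ≤ N) :
    Function.IsFixedPt F (F^[N + 1] ∅) := by
  have htrace : ∀ b, F^[N + 1] ∅ ∩ T b = F^[N] ∅ ∩ T b := fun b => by
    rw [iterate_empty_inter_eq hloc (htrans b), iterate_empty_inter_eq hloc (htrans b)]
    refine iterate_succ_empty_eq_of_ncard_le (fun P Q h => Set.inter_subset_inter_left _ (hF h))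
      (T b).finite_toSet (fun P => Set.inter_subset_right) ?_
    rw [Set.ncard_coe_finset]
    exact hcard b
  ext b
  rw [hloc, htrace, ← hloc, ← Function.iterate_succ_apply' F]

end LocalDependence

/-- **Operators with bounded local dependence are uniformly bounded.** If membership of `b` in
`F(P)` only depends on `P ∩ T(b)`, the finite sets `T(b)` are transitively closed under `T`,
and `|T(b)| ≤ N` for all `b`, then the `(N+1)`-st iterate of `F` on `∅` is already the least
fixed point; in particular the closure ordinal of `F` is at most `N + 1`. -/
theorem bounded_local_dependence {B : Type u} (F : Set B → Set B) (hF : Monotone F)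
    (T : B → Finset B) (N : ℕ)
    (hloc : ∀ (b : B) (P : Set B), b ∈ F P ↔ b ∈ F (P ∩ (T b : Set B)))
    (htrans : ∀ b : B, ∀ c ∈ T b, (T c : Set B) ⊆ (T b : Set B))
    (hcard : ∀ b : B, (T b).card ≤ N) :
    F^[N + 1] ∅ = OrderHom.lfp ⟨F, hF⟩ ∧
    closureOrdinal ⟨F, hF⟩ ≤ (N : Ordinal.{u}) + 1 := by
  have hfix : Function.IsFixedPt F (F^[N + 1] ∅) :=
    isFixedPt_iterate_empty_of_local hF hloc htrans hcard
  exact ⟨iterate_bot_eq_lfp_of_isFixedPt ⟨F, hF⟩ hfix,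
    (closureOrdinal_le_of_isFixedPt_iterate ⟨F, hF⟩ hfix).trans_eq (Nat.cast_succ N)⟩
end

section
/- Branch weight is at most the number of jumps: let S be a finite ternary tree and J ⊆ S a set of jump nodes. Then for every position ℓ ∈ S, the number of prefixes v of ℓ with v ∈ S that are weighted (i.e., v ∈ J or at least two children of v are active) is at most the cardinality of J. -/
/-- A node `v` is *active* (w.r.t. the set `J` of jump nodes) if some jump node has `v` as a
prefix, i.e. the subtree rooted at `v` contains a jump. -/
def Active (J : Set (List (Fin 3))) (v : List (Fin 3)) : Prop :=
  ∃ j ∈ J, v <+: j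

/-- A node `v` is *weighted* (w.r.t. the jump set `J`) if `v` is itself a jump node or at least
two of its children are active. -/
def Weighted (J : Set (List (Fin 3))) (v : List (Fin 3)) : Prop :=
  v ∈ J ∨ ∃ d₁ d₂ : Fin 3, d₁ ≠ d₂ ∧ Active J (v ++ [d₁]) ∧ Active J (v ++ [d₂])

/-- **Branch weight is at most the number of jumps.** If `S` is a finite ternary tree (a finite,
prefix-closed set of positions containing the root) and `J ⊆ S` is a set of jump nodes, then
for every `ℓ ∈ S` the number of weighted prefixes `v ∈ S` of `ℓ` is at most `|J|`. -/
theorem branch_weight_le_jumps (S J : Set (List (Fin 3))) (hfin : S.Finite)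
    (hroot : [] ∈ S) (hclosed : ∀ (p : List (Fin 3)) (d : Fin 3), p ++ [d] ∈ S → p ∈ S)
    (hJS : J ⊆ S) (ℓ : List (Fin 3)) (hℓ : ℓ ∈ S) :
    { v : List (Fin 3) | v ∈ S ∧ v <+: ℓ ∧ Weighted J v }.ncard ≤ J.ncard := by
  classical
  set T := { v : List (Fin 3) | v ∈ S ∧ v <+: ℓ ∧ Weighted J v } with hT
  have hP : ∀ v ∈ T, ∃ j, j ∈ J ∧ v <+: j ∧
      (j = v ∨ ∃ d, v ++ [d] <+: j ∧ ¬ (v ++ [d] <+: ℓ)) := by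
    rintro v ⟨hvS, hvℓ, hw⟩
    rcases hw with hvJ | ⟨d₁, d₂, hne, ⟨j₁, hj₁, hp₁⟩, ⟨j₂, hj₂, hp₂⟩⟩
    · exact ⟨v, hvJ, List.prefix_refl v, Or.inl rfl⟩
    · by_cases h1 : v ++ [d₁] <+: ℓ
      · refine ⟨j₂, hj₂, (List.prefix_append v [d₂]).trans hp₂, Or.inr ⟨d₂, hp₂, ?_⟩⟩
        intro h2
        rcases List.prefix_or_prefix_of_prefix h1 h2 with h | h <;>
        · have heq := List.IsPrefix.eq_of_length h (by simp)
          have h' := List.append_cancel_left heq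
          simp at h'
          first | exact hne h' | exact hne h'.symm
      · exact ⟨j₁, hj₁, (List.prefix_append v [d₁]).trans hp₁, Or.inr ⟨d₁, hp₁, h1⟩⟩
  choose! f hfJ hfpre hfcase using hP
  have hJfin : J.Finite := hfin.subset hJS
  apply Set.ncard_le_ncard_of_injOn f (fun v hv => hfJ v hv) _ hJfin
  -- injectivity
  intro v hv v' hv' heq
  by_contra hne
  -- v and v' are comparable prefixes of ℓ
  have hvℓ : v <+: ℓ := hv.2.1
  have hv'ℓ : v' <+: ℓ := hv'.2.1
  -- wlog: show a contradiction in a symmetric helper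
  have key : ∀ a ∈ T, ∀ b ∈ T, a <+: b → a ≠ b → f a = f b → False := by
    intro a ha b hb hab hneq hfeq
    have hlen : a.length < b.length := by
      rcases lt_or_eq_of_le hab.length_le with h | h
      · exact h
      · exact absurd (List.IsPrefix.eq_of_length hab h) hneq
    rcases hfcase a ha with hca | ⟨d, hd1, hd2⟩
    · -- f a = a, but b <+: f b = f a = a, length contradiction
      have : b <+: a := hca ▸ hfeq ▸ hfpre b hb
      exact absurd (le_antisymm hab.length_le this.length_le) hlen.ne
    · rcases hfcase b hb with hcb | ⟨d', hd1', hd2'⟩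
      · -- f b = b, so a ++ [d] <+: b <+: ℓ
        have : a ++ [d] <+: b := hcb ▸ hfeq ▸ hd1
        exact hd2 (this.trans hb.2.1)
      · -- both a ++ [d] and b prefixes of f a; a ++ [d] shorter, so prefix of b
        have h1 : a ++ [d] <+: f a := hd1
        have h2 : b <+: f a := hfeq ▸ hfpre b hb
        rcases List.prefix_or_prefix_of_prefix h1 h2 with h | h
        · exact hd2 (h.trans hb.2.1)
        · have : b.length ≤ a.length + 1 := by simpa using h.length_le
          have hbl : b.length = a.length + 1 := le_antisymm this hlen
          have : b = a ++ [d] := List.IsPrefix.eq_of_length h (by simpa using hbl)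
          exact hd2 (this ▸ hb.2.1)
  rcases List.prefix_or_prefix_of_prefix hvℓ hv'ℓ with h | h
  · exact key v hv v' hv' h hne heq
  · exact key v' hv' v hv h (Ne.symm hne) heq.symm
end

section
/- Logarithmic lower bound on branch weight (the heaviest-subtree pumping bound): let S be a finite ternary tree, J ⊆ S a nonempty set of jump nodes, and k a natural number with 4^k ≤ |J|. Then there exists a position ℓ ∈ S such that at least k prefixes v of ℓ with v ∈ S are weighted (i.e., v ∈ J or at least two children of v are active). -/
/-!
Induct on the height of `J`. Write `J_d` for the jumps below the child `d` of the root, re-rooted.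
Since `|J| ≤ 1 + |J_0| + |J_1| + |J_2|`, if the root is weighted some `J_d` has at least
`4 ^ (k - 1)` elements, and a branch through `d` gains the root as one more weighted prefix.
If the root is not weighted, all jumps lie below a single child, and descending to it loses no
jumps. Taking the branch to end at a jump node, all its prefixes lie in `S`.
-/

open Set

def subtreeAt {α : Type*} (J : Set (List α)) (d : α) : Set (List α) :=
  {u | d :: u ∈ J}

theorem mem_of_isPrefix_of_mem {α : Type*} {S : Set (List α)}
    (hclosed : ∀ (p : List α) (d : α), p ++ [d] ∈ S → p ∈ S)
    {p q : List α} (hpq : p <+: q) (hq : q ∈ S) : p ∈ S := by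
  obtain ⟨u, rfl⟩ := hpq
  induction u using List.reverseRecOn with
  | nil => simpa using hq
  | append_singleton u d ih => exact ih (hclosed _ d (by simpa using hq))

theorem ncard_le_one_add_sum_ncard_subtreeAt {α : Type*} [Fintype α] (J : Set (List α)) :
    J.ncard ≤ 1 + ∑ d, (subtreeAt J d).ncard := by
  have hJ : J = ({[]} ∩ J) ∪ ⋃ d, List.cons d '' subtreeAt J d := by
    ext (_ | ⟨d, u⟩) <;> simp [subtreeAt]
  calc J.ncard
      ≤ ({[]} ∩ J).ncard + (⋃ d, List.cons d '' subtreeAt J d).ncard := by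
        conv_lhs => rw [hJ]
        exact ncard_union_le _ _
    _ ≤ 1 + ∑ d, (List.cons d '' subtreeAt J d).ncard :=
        add_le_add (ncard_singleton_inter _ _) (ncard_iUnion_le_of_fintype _)
    _ = 1 + ∑ d, (subtreeAt J d).ncard := by
        simp only [ncard_image_of_injective _ List.cons_injective]

def weightedPrefixes (J : Set (List (Fin 3))) (ℓ : List (Fin 3)) : Set (List (Fin 3)) :=
  {v | v <+: ℓ ∧ Weighted J v}

theorem finite_weightedPrefixes (J : Set (List (Fin 3))) (ℓ : List (Fin 3)) :
    (weightedPrefixes J ℓ).Finite :=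
  ℓ.inits.finite_toSet.subset fun v hv => (List.mem_inits v ℓ).2 hv.1

section

variable {J : Set (List (Fin 3))} {d : Fin 3}

theorem active_cons_iff {u : List (Fin 3)} :
    Active J (d :: u) ↔ Active (subtreeAt J d) u := by
  constructor
  · rintro ⟨_, hj, t, rfl⟩
    exact ⟨u ++ t, hj, t, rfl⟩
  · rintro ⟨j, hj, hu⟩
    exact ⟨d :: j, hj, List.cons_prefix_cons.2 ⟨rfl, hu⟩⟩

theorem weighted_cons_iff {u : List (Fin 3)} :
    Weighted J (d :: u) ↔ Weighted (subtreeAt J d) u := by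
  simp only [Weighted, List.cons_append, active_cons_iff]
  rfl

theorem image_cons_weightedPrefixes_subtreeAt_subset (ℓ : List (Fin 3)) :
    List.cons d '' weightedPrefixes (subtreeAt J d) ℓ ⊆
      weightedPrefixes J (d :: ℓ) := by
  rintro _ ⟨v, ⟨hv, hw⟩, rfl⟩
  exact ⟨List.cons_prefix_cons.2 ⟨rfl, hv⟩, weighted_cons_iff.2 hw⟩

theorem ncard_weightedPrefixes_subtreeAt_le (ℓ : List (Fin 3)) :
    (weightedPrefixes (subtreeAt J d) ℓ).ncard ≤
      (weightedPrefixes J (d :: ℓ)).ncard := by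
  rw [← ncard_image_of_injective _ List.cons_injective]
  exact ncard_le_ncard (image_cons_weightedPrefixes_subtreeAt_subset ℓ)
    (finite_weightedPrefixes _ _)

theorem ncard_weightedPrefixes_subtreeAt_lt (h : Weighted J []) (ℓ : List (Fin 3)) :
    (weightedPrefixes (subtreeAt J d) ℓ).ncard <
      (weightedPrefixes J (d :: ℓ)).ncard := by
  have hnil : [] ∉ List.cons d '' weightedPrefixes (subtreeAt J d) ℓ := by
    rintro ⟨_, _, h⟩
    exact List.cons_ne_nil _ _ h
  rw [← ncard_image_of_injective _ List.cons_injective, Nat.lt_iff_add_one_le,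
    ← ncard_insert_of_notMem hnil ((finite_weightedPrefixes _ _).image _)]
  exact ncard_le_ncard (insert_subset ⟨List.nil_prefix, h⟩
    (image_cons_weightedPrefixes_subtreeAt_subset ℓ)) (finite_weightedPrefixes _ _)

theorem exists_eq_image_cons_subtreeAt_of_not_weighted (hJ : J.Nonempty)
    (h : ¬Weighted J []) : ∃ d, J = List.cons d '' subtreeAt J d := by
  obtain ⟨_ | ⟨d, t⟩, hj⟩ := hJ
  · exact absurd (Or.inl hj) h
  refine ⟨d, Subset.antisymm ?_ fun _ ⟨_, hu, hj'⟩ => hj' ▸ hu⟩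
  rintro (_ | ⟨d', t'⟩) hj'
  · exact absurd (Or.inl hj') h
  by_cases hd : d' = d
  · exact ⟨t', hd ▸ hj', by rw [hd]⟩
  · exact absurd (Or.inr ⟨d', d, hd, ⟨_, hj', by simp⟩, ⟨_, hj, by simp⟩⟩) h

theorem exists_mem_le_ncard_weightedPrefixes_of_length_lt (n : ℕ) :
    ∀ (J : Set (List (Fin 3))) (k : ℕ), (∀ j ∈ J, j.length < n) → 4 ^ k ≤ J.ncard →
      ∃ ℓ ∈ J, k ≤ (weightedPrefixes J ℓ).ncard := by
  induction n with
  | zero =>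
    intro J k hlen hk
    have hJ : J = ∅ := eq_empty_of_forall_notMem fun j hj => (hlen j hj).not_ge (Nat.zero_le _)
    simp [hJ] at hk
  | succ n ih =>
    intro J k hlen hk
    have hJ : J.Nonempty :=
      nonempty_of_ncard_ne_zero ((by positivity : 0 < 4 ^ k).trans_le hk).ne'
    have hlen' : ∀ d, ∀ u ∈ subtreeAt J d, u.length < n := fun d u hu => by
      simpa using hlen _ hu
    rcases k with _ | k
    · obtain ⟨ℓ, hℓ⟩ := hJ
      exact ⟨ℓ, hℓ, Nat.zero_le _⟩
    by_cases hw : Weighted J []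
    · obtain ⟨d, hd⟩ : ∃ d, 4 ^ k ≤ (subtreeAt J d).ncard := by
        by_contra! h
        have := ncard_le_one_add_sum_ncard_subtreeAt J
        rw [Fin.sum_univ_three] at this
        rw [pow_succ] at hk
        linarith [h 0, h 1, h 2]
      obtain ⟨ℓ, hℓ, hkℓ⟩ := ih _ k (hlen' d) hd
      exact ⟨d :: ℓ, hℓ, hkℓ.trans_lt (ncard_weightedPrefixes_subtreeAt_lt hw ℓ)⟩
    · obtain ⟨d, hJd⟩ := exists_eq_image_cons_subtreeAt_of_not_weighted hJ hw
      have hcard : J.ncard = (subtreeAt J d).ncard := by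
        conv_lhs => rw [hJd]
        exact ncard_image_of_injective _ List.cons_injective
      obtain ⟨ℓ, hℓ, hkℓ⟩ := ih _ (k + 1) (hlen' d) (hcard ▸ hk)
      exact ⟨d :: ℓ, hℓ, hkℓ.trans (ncard_weightedPrefixes_subtreeAt_le ℓ)⟩

theorem exists_mem_le_ncard_weightedPrefixes {k : ℕ} (hk : 4 ^ k ≤ J.ncard) :
    ∃ ℓ ∈ J, k ≤ (weightedPrefixes J ℓ).ncard := by
  have hJ : J.Finite := finite_of_ncard_pos (lt_of_lt_of_le (by positivity) hk)
  obtain ⟨n, hn⟩ := (hJ.image List.length).bddAbove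
  exact exists_mem_le_ncard_weightedPrefixes_of_length_lt (n + 1) J k
    (fun j hj => Nat.lt_succ_of_le (hn ⟨j, hj, rfl⟩)) hk

end

theorem exists_branch_with_log_weight_general (S J : Set (List (Fin 3)))
    (hclosed : ∀ (p : List (Fin 3)) (d : Fin 3), p ++ [d] ∈ S → p ∈ S)
    (hJS : J ⊆ S) (k : ℕ) (hk : 4 ^ k ≤ J.ncard) :
    ∃ ℓ ∈ S, k ≤ { v : List (Fin 3) | v ∈ S ∧ v <+: ℓ ∧ Weighted J v }.ncard := by
  obtain ⟨ℓ, hℓJ, hkℓ⟩ := exists_mem_le_ncard_weightedPrefixes hk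
  refine ⟨ℓ, hJS hℓJ, hkℓ.trans_eq (congrArg ncard ?_)⟩
  ext v
  exact ⟨fun hv => ⟨mem_of_isPrefix_of_mem hclosed hv.1 (hJS hℓJ), hv⟩, fun hv => hv.2⟩

/-- **Logarithmic lower bound on branch weight.** If `S` is a finite ternary tree, `J ⊆ S` a
nonempty set of jump nodes and `4 ^ k ≤ |J|`, then some position `ℓ ∈ S` has at least `k`
weighted prefixes `v ∈ S`. -/
theorem exists_branch_with_log_weight (S J : Set (List (Fin 3))) (hfin : S.Finite)
    (hroot : [] ∈ S) (hclosed : ∀ (p : List (Fin 3)) (d : Fin 3), p ++ [d] ∈ S → p ∈ S)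
    (hJS : J ⊆ S) (hJne : J.Nonempty) (k : ℕ) (hk : 4 ^ k ≤ J.ncard) :
    ∃ ℓ ∈ S, k ≤ { v : List (Fin 3) | v ∈ S ∧ v <+: ℓ ∧ Weighted J v }.ncard :=
  exists_branch_with_log_weight_general S J hclosed hJS k hk
end
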